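/- Suppose (x̂, 0) ∈ A(λ, r) for some (λ, r) ∈ ℝᵐ × (0, ∞). Then x̂ is a stationary point of (NLP): there exists ξ ∈ ℝᵐ with ‖ξ‖ ≤ 1 such that ∇f(x̂) + ∇h(x̂)(λ + r ξ) = 0 and h(x̂) = 0; that is, λ + r ξ is a Lagrange multiplier associated with x̂. -/

import Mathlib

/-!
Since `L̃(x̂, 0) < ∞` forces `h x̂ = 0`, and `min_{t > 0} (r ‖h x‖² / (2t) + r t / 2) = r ‖h x‖`
when `h x ≠ 0`, a point `(x̂, 0) ∈ A(λ, r)` makes `x̂` a global minimizer of the exact penalty function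
`f + ⟨λ, h⟩ + r ‖h‖`. Its one-sided directional derivatives at `x̂` give, with `A = h'(x̂)`,
`⟨∇f(x̂) + A*λ, d⟩ + r ‖A d‖ ≥ 0` for every `d`; i.e. `-(∇f(x̂) + A*λ)` lies in the
subdifferential `r A*(unit ball)` of `r ‖A ·‖` at `0`, which is the claim.
-/

noncomputable section

open Classical in
/-- The extended-real-valued smoothing function `L̃_{λ,r}(x,t)`. -/
def Ltilde {n m : ℕ} (f : EuclideanSpace ℝ (Fin n) → ℝ)
    (h : EuclideanSpace ℝ (Fin n) → EuclideanSpace ℝ (Fin m))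
    (lam : EuclideanSpace ℝ (Fin m)) (r : ℝ)
    (x : EuclideanSpace ℝ (Fin n)) (t : ℝ) : EReal :=
  if 0 < t then
    (((f x + (inner ℝ lam (h x) : ℝ) + r / (2 * t) * ‖h x‖ ^ 2 + r / 2 * t) : ℝ) : EReal)
  else if t = 0 ∧ h x = 0 then ((f x : ℝ) : EReal)
  else ⊤

/-- The augmented dual function `q̃(λ, r) = inf_{(x,t)} L̃_{λ,r}(x,t)`. -/
def qtilde {n m : ℕ} (f : EuclideanSpace ℝ (Fin n) → ℝ)
    (h : EuclideanSpace ℝ (Fin n) → EuclideanSpace ℝ (Fin m))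
    (lam : EuclideanSpace ℝ (Fin m)) (r : ℝ) : EReal :=
  ⨅ p : EuclideanSpace ℝ (Fin n) × ℝ, Ltilde f h lam r p.1 p.2

/-- The set `A(λ, r)` of global minimizers of `L̃_{λ,r}`. -/
def Aset {n m : ℕ} (f : EuclideanSpace ℝ (Fin n) → ℝ)
    (h : EuclideanSpace ℝ (Fin n) → EuclideanSpace ℝ (Fin m))
    (lam : EuclideanSpace ℝ (Fin m)) (r : ℝ) :
    Set (EuclideanSpace ℝ (Fin n) × ℝ) :=
  {p | Ltilde f h lam r p.1 p.2 = qtilde f h lam r}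

open Filter Topology
open scoped InnerProduct Gradient

section

variable {F : Type*} [NormedAddCommGroup F] [NormedSpace ℝ F]

theorem IsLocalMin.hasDerivAt_add_mul_norm_nonneg {g : ℝ → ℝ} {k : ℝ → F} {a g' c : ℝ} {k' : F}
    (hmin : IsLocalMin (fun s => g s + c * ‖k s‖) a) (hka : k a = 0)
    (hg : HasDerivAt g g' a) (hk : HasDerivAt k k' a) : 0 ≤ g' + c * ‖k'‖ := by
  have hright : 𝓝[>] a ≤ 𝓝[≠] a := nhdsWithin_mono _ fun s hs => ne_of_gt hs
  have hlim : Tendsto (fun s => slope g a s + c * ‖slope k a s‖) (𝓝[>] a)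
      (𝓝 (g' + c * ‖k'‖)) :=
    ((hasDerivAt_iff_tendsto_slope.mp hg).mono_left hright).add
      (((hasDerivAt_iff_tendsto_slope.mp hk).mono_left hright).norm.const_mul c)
  refine ge_of_tendsto hlim ?_
  filter_upwards [self_mem_nhdsWithin, nhdsWithin_le_nhds hmin] with s (hs : a < s) hmin_s
  have hsa : 0 < s - a := sub_pos.mpr hs
  have hquot : slope g a s + c * ‖slope k a s‖ =
      (g s + c * ‖k s‖ - (g a + c * ‖k a‖)) / (s - a) := by
    rw [slope_def_field, slope, hka, vsub_eq_sub, sub_zero, norm_smul, norm_inv,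
      Real.norm_of_nonneg hsa.le, norm_zero]
    field_simp
    ring
  rw [hquot]
  exact div_nonneg (sub_nonneg.mpr hmin_s) hsa.le

variable {E : Type*} [NormedAddCommGroup E] [NormedSpace ℝ E]

theorem IsLocalMin.hasFDerivAt_add_mul_norm_nonneg {g : E → ℝ} {k : E → F}
    {g' : E →L[ℝ] ℝ} {k' : E →L[ℝ] F} {x : E} {c : ℝ}
    (hmin : IsLocalMin (fun y => g y + c * ‖k y‖) x) (hkx : k x = 0)
    (hg : HasFDerivAt g g' x) (hk : HasFDerivAt k k' x) (d : E) : 0 ≤ g' d + c * ‖k' d‖ := by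
  have hline : HasDerivAt (fun s : ℝ => x + s • d) d 0 := by
    simpa using ((hasDerivAt_id (0 : ℝ)).smul_const d).const_add x
  have hx : x + (0 : ℝ) • d = x := by simp
  rw [← hx] at hg hk hkx hmin
  exact IsLocalMin.hasDerivAt_add_mul_norm_nonneg
    (hmin.comp_continuous (g := fun s : ℝ => x + s • d) (by fun_prop)) hkx
    (hg.comp_hasDerivAt 0 hline) (hk.comp_hasDerivAt 0 hline)

end

section

variable {E F : Type*} [NormedAddCommGroup E] [InnerProductSpace ℝ E] [FiniteDimensional ℝ E]
  [NormedAddCommGroup F] [InnerProductSpace ℝ F] [FiniteDimensional ℝ F]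

namespace ContinuousLinearMap

theorem exists_adjoint_apply_apply_eq_of_mem_orthogonal_ker (A : E →L[ℝ] F) {w : E}
    (hw : w ∈ A.kerᗮ) : ∃ d, (A†) (A d) = w := by
  rw [← ker_adjoint_comp_self, orthogonal_ker, Submodule.topologicalClosure_eq_self] at hw
  simpa using hw

theorem exists_norm_le_adjoint_apply_eq (A : E →L[ℝ] F) {w : E} {c : ℝ} (hc : 0 ≤ c)
    (hw : ∀ d, 0 ≤ inner ℝ w d + c * ‖A d‖) : ∃ u, ‖u‖ ≤ c ∧ (A†) u = w := by
  have hker : w ∈ A.kerᗮ := by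
    intro d hd
    have h₁ := hw d
    have h₂ := hw (-d)
    simp only [LinearMap.mem_ker, coe_coe] at hd
    simp only [map_neg, hd, norm_neg, norm_zero, mul_zero, add_zero, inner_neg_right] at h₁ h₂
    rw [real_inner_comm]
    linarith
  -- Choosing `u ∈ range A`, say `u = A d`, testing at `-d` gives `‖u‖² ≤ c ‖u‖`.
  obtain ⟨d, rfl⟩ := A.exists_adjoint_apply_apply_eq_of_mem_orthogonal_ker hker
  refine ⟨A d, ?_, rfl⟩
  have h := hw (-d)
  rw [inner_neg_right, adjoint_inner_left, real_inner_self_eq_norm_sq, map_neg, norm_neg] at h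
  nlinarith [norm_nonneg (A d)]

end ContinuousLinearMap

end

theorem adjoint_fderiv_apply_eq_sum_gradient {E ι : Type*} [NormedAddCommGroup E]
    [InnerProductSpace ℝ E] [CompleteSpace E] [Fintype ι] {h : E → EuclideanSpace ℝ ι} {x : E}
    (hx : DifferentiableAt ℝ h x) (μ : EuclideanSpace ℝ ι) :
    ((fderiv ℝ h x)†) μ = ∑ i, μ i • ∇ (fun y => h y i) x := by
  refine ext_inner_right ℝ fun d => ?_
  have hcoord (i : ι) : fderiv ℝ h x d i = fderiv ℝ (fun y => h y i) x d := by
    have hi : HasFDerivAt (fun y => h y i) ((EuclideanSpace.proj i).comp (fderiv ℝ h x)) x :=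
      (EuclideanSpace.proj (𝕜 := ℝ) i).hasFDerivAt.comp x hx.hasFDerivAt
    rw [hi.fderiv]
    rfl
  simp only [ContinuousLinearMap.adjoint_inner_left, sum_inner, real_inner_smul_left,
    inner_gradient_left, PiLp.inner_apply, hcoord]
  simp [mul_comm]

section Ltilde

variable {n m : ℕ} {f : EuclideanSpace ℝ (Fin n) → ℝ}
  {h : EuclideanSpace ℝ (Fin n) → EuclideanSpace ℝ (Fin m)} {lam : EuclideanSpace ℝ (Fin m)}
  {r : ℝ} {x : EuclideanSpace ℝ (Fin n)}

theorem qtilde_le_Ltilde (x : EuclideanSpace ℝ (Fin n)) (t : ℝ) :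
    qtilde f h lam r ≤ Ltilde f h lam r x t :=
  iInf_le (fun p : EuclideanSpace ℝ (Fin n) × ℝ => Ltilde f h lam r p.1 p.2) (x, t)

theorem Ltilde_of_pos {t : ℝ} (ht : 0 < t) :
    Ltilde f h lam r x t =
      ((f x + inner ℝ lam (h x) + r / (2 * t) * ‖h x‖ ^ 2 + r / 2 * t : ℝ) : EReal) :=
  if_pos ht

/-- `t = ‖h x‖` is the minimizing choice of `t > 0`. -/
theorem Ltilde_norm (hx : h x ≠ 0) :
    Ltilde f h lam r x ‖h x‖ = ((f x + inner ℝ lam (h x) + r * ‖h x‖ : ℝ) : EReal) := by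
  have hpos : 0 < ‖h x‖ := norm_pos_iff.mpr hx
  rw [Ltilde_of_pos hpos]
  congr 1
  field_simp
  ring

theorem Ltilde_zero_of_eq_zero (hx : h x = 0) : Ltilde f h lam r x 0 = f x := by
  simp [Ltilde, hx]

theorem apply_eq_zero_of_mem_Aset (hmem : (x, 0) ∈ Aset f h lam r) : h x = 0 := by
  by_contra hx
  have htop : Ltilde f h lam r x 0 = ⊤ := by simp [Ltilde, hx]
  have hle := qtilde_le_Ltilde (f := f) (h := h) (lam := lam) (r := r) x 1
  rw [← show Ltilde f h lam r x 0 = qtilde f h lam r from hmem, htop, top_le_iff,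
    Ltilde_of_pos one_pos] at hle
  exact EReal.coe_ne_top _ hle

theorem isMinOn_of_mem_Aset (hmem : (x, 0) ∈ Aset f h lam r) :
    IsMinOn (fun y => f y + inner ℝ lam (h y) + r * ‖h y‖) Set.univ x := by
  have hx := apply_eq_zero_of_mem_Aset hmem
  have hq : qtilde f h lam r = f x := by
    rw [← show Ltilde f h lam r x 0 = qtilde f h lam r from hmem, Ltilde_zero_of_eq_zero hx]
  intro y _
  by_cases hy : h y = 0
  · have hle := qtilde_le_Ltilde (f := f) (h := h) (lam := lam) (r := r) y 0
    rw [hq, Ltilde_zero_of_eq_zero hy, EReal.coe_le_coe_iff] at hle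
    simpa [hx, hy] using hle
  · have hle := qtilde_le_Ltilde (f := f) (h := h) (lam := lam) (r := r) y ‖h y‖
    rw [hq, Ltilde_norm hy, EReal.coe_le_coe_iff] at hle
    simpa [hx] using hle

end Ltilde

/-- if `(x̂, 0) ∈ A(λ, r)`, then `x̂` is a stationary point of the NLP:
`h x̂ = 0` and there is `ξ` with `‖ξ‖ ≤ 1` such that
`∇f(x̂) + ∇h(x̂)(λ + r ξ) = 0`, i.e. `λ + r ξ` is a Lagrange multiplier. -/
theorem stmt10 {n m : ℕ} (f : EuclideanSpace ℝ (Fin n) → ℝ)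
    (h : EuclideanSpace ℝ (Fin n) → EuclideanSpace ℝ (Fin m))
    (hf : ContDiff ℝ 2 f) (hh : ContDiff ℝ 2 h)
    (lam : EuclideanSpace ℝ (Fin m)) (r : ℝ) (hr : 0 < r)
    (xh : EuclideanSpace ℝ (Fin n))
    (hmem : (xh, (0 : ℝ)) ∈ Aset f h lam r) :
    h xh = 0 ∧
    ∃ ξ : EuclideanSpace ℝ (Fin m), ‖ξ‖ ≤ 1 ∧
      gradient f xh + ∑ i, (lam i + r * ξ i) • gradient (fun y => h y i) xh = 0 := by
  have hx0 := apply_eq_zero_of_mem_Aset hmem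
  have hfx : DifferentiableAt ℝ f xh := hf.differentiable (by norm_num) xh
  have hhx : DifferentiableAt ℝ h xh := hh.differentiable (by norm_num) xh
  set A := fderiv ℝ h xh
  have hstat (d) : 0 ≤ inner ℝ (∇ f xh + (A†) lam) d + r * ‖A d‖ := by
    have hmin := (isMinOn_of_mem_Aset hmem).isLocalMin univ_mem
    have := hmin.hasFDerivAt_add_mul_norm_nonneg hx0
      (hfx.hasFDerivAt.add ((innerSL ℝ lam).hasFDerivAt.comp xh hhx.hasFDerivAt))
      hhx.hasFDerivAt d
    simpa [inner_add_left, inner_gradient_left, ContinuousLinearMap.adjoint_inner_left] using this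
  obtain ⟨u, hu, hAu⟩ := A.exists_norm_le_adjoint_apply_eq hr.le hstat
  refine ⟨hx0, -r⁻¹ • u, ?_, ?_⟩
  · rw [norm_smul, norm_neg, norm_inv, Real.norm_of_nonneg hr.le]
    exact inv_mul_le_one_of_le₀ hu hr.le
  · have hμ : ∀ i, lam i + r * (-r⁻¹ • u) i = (lam - u) i := fun i => by
      simp [hr.ne', sub_eq_add_neg]
    simp_rw [hμ]
    rw [← adjoint_fderiv_apply_eq_sum_gradient hhx, map_sub, hAu]
    abel
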